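/- arXiv:1404.5535 — 2 statements merged into one kernel-verified Lean document; each statement's English description precedes it below -/
import Mathlib

section
/- The orthogonal group O(n) is a maximal compact subgroup of GL(n,ℝ): O(n) is a compact subgroup of GL(n,ℝ), and every compact subgroup H of GL(n,ℝ) with O(n) ⊆ H satisfies H = O(n). -/
open Matrix

/-- The orthogonal group `O(n) = {A ∈ GL(n,ℝ) : Aᵀ·A = 1}` as a subgroup of `GL(n,ℝ)`. -/
def orthogonalSubgroup (n : ℕ) : Subgroup (GL (Fin n) ℝ) where
  carrier := {g | ((g : GL (Fin n) ℝ) : Matrix (Fin n) (Fin n) ℝ)ᵀ *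
    ((g : GL (Fin n) ℝ) : Matrix (Fin n) (Fin n) ℝ) = 1}
  one_mem' := by simp
  mul_mem' := by
    intro a b ha hb
    simp only [Set.mem_setOf_eq] at *
    have h : ((a * b : GL (Fin n) ℝ) : Matrix (Fin n) (Fin n) ℝ)
        = (a : Matrix (Fin n) (Fin n) ℝ) * (b : Matrix (Fin n) (Fin n) ℝ) := rfl
    rw [h, Matrix.transpose_mul, Matrix.mul_assoc, ← Matrix.mul_assoc
      ((a : Matrix (Fin n) (Fin n) ℝ)ᵀ), ha, Matrix.one_mul, hb]
  inv_mem' := by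
    intro a ha
    simp only [Set.mem_setOf_eq] at *
    have h2 : (a : Matrix (Fin n) (Fin n) ℝ) * (a : Matrix (Fin n) (Fin n) ℝ)ᵀ = 1 :=
      mul_eq_one_comm.mp ha
    have h3 : ((a⁻¹ : GL (Fin n) ℝ) : Matrix (Fin n) (Fin n) ℝ)
        = (a : Matrix (Fin n) (Fin n) ℝ)ᵀ :=
      Units.inv_eq_of_mul_eq_one_right h2
    rw [h3, Matrix.transpose_transpose, h2]

/-! Every `g ∈ GL(n,ℝ)` has a singular value decomposition `g = u * s * v` with `u, v`
orthogonal and `s` diagonal with positive entries: diagonalize `gᵀ * g` by an orthogonal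
`v⁻¹`, then normalize the pairwise orthogonal columns of `g * v⁻¹`. If `H ⊇ O(n)` is a
subgroup containing `g`, then `s = u⁻¹ * g * v⁻¹ ∈ H`, so `H` contains every power `s ^ k`,
`k ∈ ℤ`, whose diagonal entries are the `k`-th powers of those of `s`. Boundedness of `H`
forces these entries to be `1`, so `g = u * v` is orthogonal. -/

section

variable {ι : Type*} [Fintype ι] [DecidableEq ι]

lemma isCompact_setOf_transpose_mul_self_eq_one :
    IsCompact {A : Matrix ι ι ℝ | Aᵀ * A = 1} := by
  have hclosed : IsClosed {A : Matrix ι ι ℝ | Aᵀ * A = 1} :=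
    isClosed_eq (continuous_id.matrix_transpose.matrix_mul continuous_id) continuous_const
  refine (isCompact_univ_pi fun _ => isCompact_univ_pi fun _ => isCompact_Icc (a := -1) (b := 1))
    |>.of_isClosed_subset hclosed fun (A : Matrix ι ι ℝ) hA i _ j _ => ?_
  have hU : A ∈ unitaryGroup ι ℝ := by
    rw [mem_unitaryGroup_iff', star_eq_conjTranspose, conjTranspose_eq_transpose_of_trivial]
    exact hA
  exact abs_le.mp (by simpa using entry_norm_bound_of_unitary hU i j)

lemma eq_one_of_forall_pow_le_of_forall_inv_pow_le {x C : ℝ} (hx : 0 < x)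
    (hpow : ∀ k : ℕ, x ^ k ≤ C) (hinv : ∀ k : ℕ, x⁻¹ ^ k ≤ C) : x = 1 := by
  rcases lt_trichotomy x 1 with hlt | heq | hgt
  · obtain ⟨k, hk⟩ := pow_unbounded_of_one_lt C ((one_lt_inv₀ hx).mpr hlt)
    exact absurd (hinv k) hk.not_ge
  · exact heq
  · obtain ⟨k, hk⟩ := pow_unbounded_of_one_lt C hgt
    exact absurd (hpow k) hk.not_ge

lemma val_inv_eq_diagonal_inv {K : Type*} [Field K] {s : GL ι K} {d : ι → K}
    (hd : ∀ i, d i ≠ 0) (hsd : (s : Matrix ι ι K) = diagonal d) :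
    ((s⁻¹ : GL ι K) : Matrix ι ι K) = diagonal fun i => (d i)⁻¹ := by
  refine Units.inv_eq_of_mul_eq_one_right ?_
  rw [hsd, diagonal_mul_diagonal, ← diagonal_one]
  exact congrArg diagonal (funext fun i => mul_inv_cancel₀ (hd i))

lemma eq_one_of_mem_of_val_eq_diagonal {H : Subgroup (GL ι ℝ)}
    (hH : IsCompact ((fun g : GL ι ℝ => (g : Matrix ι ι ℝ)) '' (H : Set (GL ι ℝ))))
    {s : GL ι ℝ} (hs : s ∈ H) {d : ι → ℝ} (hd : ∀ i, 0 < d i)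
    (hsd : (s : Matrix ι ι ℝ) = diagonal d) : s = 1 := by
  suffices d = 1 by exact Units.ext (by rw [hsd, this]; exact diagonal_one)
  funext i
  obtain ⟨C, hC⟩ := hH.exists_bound_of_continuousOn (continuous_id.matrix_elem i i).continuousOn
  have hpow : ∀ t ∈ H, ∀ e : ι → ℝ, (t : Matrix ι ι ℝ) = diagonal e → ∀ k : ℕ, e i ^ k ≤ C := by
    intro t ht e hte k
    have hbound : ‖((t ^ k : GL ι ℝ) : Matrix ι ι ℝ) i i‖ ≤ C := hC _ ⟨t ^ k, pow_mem ht k, rfl⟩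
    rw [Units.val_pow_eq_pow_val, hte, diagonal_pow, diagonal_apply_eq, Real.norm_eq_abs]
      at hbound
    exact (le_abs_self _).trans hbound
  exact eq_one_of_forall_pow_le_of_forall_inv_pow_le (hd i) (hpow s hs d hsd)
    (hpow s⁻¹ (H.inv_mem hs) d⁻¹ (val_inv_eq_diagonal_inv (fun j => (hd j).ne') hsd))

lemma exists_orthogonal_transpose_mul_self_eq_diagonal (g : GL ι ℝ) :
    ∃ v : GL ι ℝ, (v : Matrix ι ι ℝ)ᵀ * v = 1 ∧ ∃ d : ι → ℝ, (∀ i, 0 < d i) ∧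
      ((g * v : GL ι ℝ) : Matrix ι ι ℝ)ᵀ * (g * v : GL ι ℝ) = diagonal d := by
  have hS : ((g : Matrix ι ι ℝ)ᵀ * g).PosDef := by
    simpa using PosDef.conjTranspose_mul_self (g : Matrix ι ι ℝ)
      (mulVec_injective_iff_isUnit.mpr g.isUnit)
  refine ⟨Unitary.toUnits hS.1.eigenvectorUnitary, ?_, hS.1.eigenvalues, hS.eigenvalues_pos, ?_⟩
  · simpa [star_eq_conjTranspose] using Unitary.coe_star_mul_self hS.1.eigenvectorUnitary
  · simpa [star_eq_conjTranspose, Matrix.mul_assoc] using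
      hS.1.conjStarAlgAut_star_eigenvectorUnitary

lemma exists_val_eq_diagonal_sqrt_orthogonal_mul_inv (h : GL ι ℝ) {d : ι → ℝ}
    (hd : ∀ i, 0 < d i) (hh : (h : Matrix ι ι ℝ)ᵀ * h = diagonal d) :
    ∃ s : GL ι ℝ, (s : Matrix ι ι ℝ) = diagonal (fun i => √(d i)) ∧
      ((h * s⁻¹ : GL ι ℝ) : Matrix ι ι ℝ)ᵀ * (h * s⁻¹ : GL ι ℝ) = 1 := by
  have hsqrt : ∀ i, √(d i) ≠ 0 := fun i => (Real.sqrt_pos.mpr (hd i)).ne'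
  obtain ⟨s, hs⟩ := isUnit_diagonal.mpr (Pi.isUnit_iff.mpr fun i => (hsqrt i).isUnit)
  refine ⟨s, hs, ?_⟩
  rw [Units.val_mul, transpose_mul, val_inv_eq_diagonal_inv hsqrt hs, diagonal_transpose,
    Matrix.mul_assoc, ← Matrix.mul_assoc _ (h : Matrix ι ι ℝ), hh, diagonal_mul_diagonal,
    diagonal_mul_diagonal, ← diagonal_one]
  refine congrArg diagonal (funext fun i => ?_)
  field_simp [hsqrt i]
  exact (Real.sq_sqrt (hd i).le).symm

end

lemma image_coe_orthogonalSubgroup (n : ℕ) :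
    (fun g : GL (Fin n) ℝ => (g : Matrix (Fin n) (Fin n) ℝ)) ''
      (orthogonalSubgroup n : Set (GL (Fin n) ℝ)) = {A | Aᵀ * A = 1} := by
  ext A
  exact ⟨fun ⟨g, hg, hgA⟩ => hgA ▸ hg, fun hA => ⟨⟨A, Aᵀ, mul_eq_one_comm.mp hA, hA⟩, hA, rfl⟩⟩

lemma le_orthogonalSubgroup_of_isCompact {n : ℕ} {H : Subgroup (GL (Fin n) ℝ)}
    (hH : IsCompact ((fun g : GL (Fin n) ℝ => (g : Matrix (Fin n) (Fin n) ℝ)) ''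
      (H : Set (GL (Fin n) ℝ))))
    (hOH : orthogonalSubgroup n ≤ H) : H ≤ orthogonalSubgroup n := by
  intro g hg
  obtain ⟨v, hv, d, hd, hgv⟩ := exists_orthogonal_transpose_mul_self_eq_diagonal g
  obtain ⟨s, hs, hgvs⟩ := exists_val_eq_diagonal_sqrt_orthogonal_mul_inv (g * v) hd hgv
  have hsH : s ∈ H := by
    rw [show s = (g * v * s⁻¹)⁻¹ * (g * v) by group]
    exact H.mul_mem (H.inv_mem (hOH hgvs)) (H.mul_mem hg (hOH hv))
  have hs1 : s = 1 :=
    eq_one_of_mem_of_val_eq_diagonal hH hsH (fun i => Real.sqrt_pos.mpr (hd i)) hs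
  rw [hs1, inv_one, mul_one] at hgvs
  rw [show g = g * v * v⁻¹ by group]
  exact (orthogonalSubgroup n).mul_mem hgvs ((orthogonalSubgroup n).inv_mem hv)

/-- `O(n)` is a maximal compact subgroup of `GL(n,ℝ)`: it is compact (as a set of
`n×n` real matrices), and every compact subgroup `H` of `GL(n,ℝ)` containing `O(n)`
equals `O(n)`. -/
theorem orthogonal_maximal_compact (n : ℕ) :
    IsCompact ((fun g : GL (Fin n) ℝ => (g : Matrix (Fin n) (Fin n) ℝ)) ''
      (orthogonalSubgroup n : Set (GL (Fin n) ℝ))) ∧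
    ∀ H : Subgroup (GL (Fin n) ℝ),
      IsCompact ((fun g : GL (Fin n) ℝ => (g : Matrix (Fin n) (Fin n) ℝ)) ''
        (H : Set (GL (Fin n) ℝ))) →
      orthogonalSubgroup n ≤ H → H = orthogonalSubgroup n :=
  ⟨image_coe_orthogonalSubgroup n ▸ isCompact_setOf_transpose_mul_self_eq_one,
    fun _ hH hOH => le_antisymm (le_orthogonalSubgroup_of_isCompact hH hOH) hOH⟩
end

section
/- Iwasawa decomposition of SL(n,ℝ): every g ∈ SL(n,ℝ) can be written uniquely as g = k·a·n where k ∈ SO(n), a is a diagonal n×n matrix with positive diagonal entries and determinant 1, and n is an upper triangular n×n real matrix with all diagonal entries equal to 1. -/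
/-!
Gram–Schmidt applied to the columns of `g` gives `g = k * B` with `k` orthogonal and `B` upper
triangular; flipping signs makes the diagonal of `B` positive, and `B` then splits as a positive
diagonal matrix times a unipotent one. Uniqueness holds because an orthogonal upper triangular
matrix with positive diagonal is the identity (its inverse, the transpose, is also upper
triangular). Finally `det k = ±1` and `det a > 0`, so `det g = 1` forces both to be `1`.
-/

open Matrix

namespace Matrix

variable {R ι : Type*}

lemma IsDiag.isUpperTriangular [Preorder ι] [Zero R] {a : Matrix ι ι R} (ha : a.IsDiag) :
    a.IsUpperTriangular :=
  fun _ _ h => ha h.ne'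

section Fintype

variable [Fintype ι]

lemma det_eq_one_of_transpose_mul_self [DecidableEq ι] [CommRing R] [LinearOrder R]
    [IsStrictOrderedRing R] {k B : Matrix ι ι R} (hk : kᵀ * k = 1) (hB : 0 < B.det)
    (h : (k * B).det = 1) : k.det = 1 := by
  have hsq : k.det * k.det = 1 := by simpa using congrArg det hk
  rw [det_mul] at h
  rcases mul_self_eq_one_iff.mp hsq with h1 | h1
  · exact h1
  · rw [h1] at h
    linarith

lemma IsDiag.diag_mul_of_diag_eq_one [DecidableEq ι] [NonAssocSemiring R] {a u : Matrix ι ι R}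
    (ha : a.IsDiag) (hu : ∀ i, u i i = 1) : (a * u).diag = a.diag := by
  ext i
  rw [← ha.diagonal_diag]
  simp [hu]

variable [LinearOrder ι]

lemma IsUpperTriangular.mul_apply_self [NonUnitalNonAssocSemiring R] {A B : Matrix ι ι R}
    (hA : A.IsUpperTriangular) (hB : B.IsUpperTriangular) (i : ι) :
    (A * B) i i = A i i * B i i := by
  rw [mul_apply]
  refine Finset.sum_eq_single i (fun k _ hk => ?_) (by simp)
  rcases hk.lt_or_gt with hki | hik
  · rw [hA hki, zero_mul]
  · rw [hB hik, mul_zero]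

variable [DecidableEq ι]

lemma IsUpperTriangular.det_pos [CommRing R] [LinearOrder R] [IsStrictOrderedRing R]
    {B : Matrix ι ι R} (hB : B.IsUpperTriangular) (hpos : ∀ i, 0 < B i i) : 0 < B.det := by
  rw [det_of_isUpperTriangular hB]
  exact Finset.prod_pos fun i _ => hpos i

lemma IsUpperTriangular.eq_one_of_transpose_mul_self [CommRing R] [LinearOrder R]
    [IsStrictOrderedRing R] {M : Matrix ι ι R} (hM : M.IsUpperTriangular)
    (hpos : ∀ i, 0 < M i i) (horth : Mᵀ * M = 1) : M = 1 := by
  have : Invertible M := invertibleOfLeftInverse _ _ horth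
  have hMt : Mᵀ.IsUpperTriangular := by
    rw [← inv_eq_left_inv horth]
    exact blockTriangular_inv_of_blockTriangular hM
  ext i j
  rcases lt_trichotomy i j with hij | rfl | hji
  · rw [one_apply_ne hij.ne]
    exact hMt hij
  · have h := congrFun₂ horth i i
    rw [hMt.mul_apply_self hM, transpose_apply, one_apply_eq, mul_self_eq_one_iff] at h
    rw [one_apply_eq]
    exact h.resolve_right fun h' => by linarith [hpos i]
  · rw [one_apply_ne hji.ne']
    exact hM hji

lemma orthogonal_mul_isUpperTriangular_inj [Field R] [LinearOrder R] [IsStrictOrderedRing R]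
    {k k' B B' : Matrix ι ι R} (hk : kᵀ * k = 1) (hk' : k'ᵀ * k' = 1)
    (hB : B.IsUpperTriangular) (hBpos : ∀ i, 0 < B i i)
    (hB' : B'.IsUpperTriangular) (hB'pos : ∀ i, 0 < B' i i) (h : k * B = k' * B') :
    k = k' ∧ B = B' := by
  have : Invertible B := B.invertibleOfIsUnitDet (hB.det_pos hBpos).ne'.isUnit
  have hk'_right : k' * k'ᵀ = 1 := mul_eq_one_comm.mp hk'
  set M := k'ᵀ * k with hM
  have hMB : M * B = B' := by rw [Matrix.mul_assoc, h, ← Matrix.mul_assoc, hk', Matrix.one_mul]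
  have hMup : M.IsUpperTriangular := by
    rw [← (mul_inv_eq_iff_eq_mul_of_invertible B B' M).mpr hMB.symm]
    exact hB'.mul (blockTriangular_inv_of_blockTriangular hB)
  have hMpos : ∀ i, 0 < M i i := fun i =>
    (pos_iff_pos_of_mul_pos (hMup.mul_apply_self hB i ▸ hMB ▸ hB'pos i)).mpr (hBpos i)
  have hMorth : Mᵀ * M = 1 := by
    rw [hM, transpose_mul, transpose_transpose, Matrix.mul_assoc, ← Matrix.mul_assoc k',
      hk'_right, Matrix.one_mul, hk]
  have hM1 : M = 1 := hMup.eq_one_of_transpose_mul_self hMpos hMorth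
  refine ⟨?_, by rw [← hMB, hM1, Matrix.one_mul]⟩
  rw [← Matrix.one_mul k, ← hk'_right, Matrix.mul_assoc, ← hM, hM1, Matrix.mul_one]

lemma existsUnique_isDiag_mul_unitUpperTriangular [Field R] [LinearOrder R]
    [IsStrictOrderedRing R] {B : Matrix ι ι R} (hB : B.IsUpperTriangular)
    (hpos : ∀ i, 0 < B i i) :
    ∃! au : Matrix ι ι R × Matrix ι ι R,
      (au.1.IsDiag ∧ ∀ i, 0 < au.1 i i) ∧ (au.2.IsUpperTriangular ∧ ∀ i, au.2 i i = 1) ∧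
        B = au.1 * au.2 := by
  refine ⟨(diagonal B.diag, diagonal B.diag⁻¹ * B), ⟨⟨isDiag_diagonal _, by simpa using hpos⟩,
    ⟨(blockTriangular_diagonal _).mul hB, fun i => by simp [(hpos i).ne']⟩, ?_⟩, ?_⟩
  · ext i j
    simp [(hpos i).ne']
  rintro ⟨a, u⟩ ⟨⟨ha, hapos⟩, ⟨-, hu⟩, rfl⟩
  rw [ha.diag_mul_of_diag_eq_one hu, ha.diagonal_diag]
  refine Prod.ext rfl ?_
  ext i j
  rw [← ha.diagonal_diag]
  simp [(hapos i).ne']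

variable [LocallyFiniteOrderBot ι]

lemma exists_orthogonal_mul_isUpperTriangular (g : Matrix ι ι ℝ) :
    ∃ k B : Matrix ι ι ℝ, kᵀ * k = 1 ∧ B.IsUpperTriangular ∧ g = k * B := by
  let cols : ι → EuclideanSpace ℝ ι := fun j => WithLp.toLp 2 fun i => g i j
  let b := InnerProductSpace.gramSchmidtOrthonormalBasis finrank_euclideanSpace cols
  refine ⟨(EuclideanSpace.basisFun ι ℝ).toBasis.toMatrix b, b.toBasis.toMatrix cols, ?_,
    InnerProductSpace.gramSchmidtOrthonormalBasis_inv_isUpperTriangular _ cols, ?_⟩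
  · simpa using (EuclideanSpace.basisFun ι ℝ).toMatrix_orthonormalBasis_conjTranspose_mul_self b
  · rw [← b.coe_toBasis, Module.Basis.toMatrix_mul_toMatrix]
    ext i j
    simp [Module.Basis.toMatrix_apply, cols]

lemma exists_orthogonal_mul_isUpperTriangular_of_diag_pos (g : Matrix ι ι ℝ)
    (hg : IsUnit g.det) :
    ∃ k B : Matrix ι ι ℝ, kᵀ * k = 1 ∧ B.IsUpperTriangular ∧ (∀ i, 0 < B i i) ∧
      g = k * B := by
  obtain ⟨k, B, hk, hB, rfl⟩ := exists_orthogonal_mul_isUpperTriangular g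
  have hBdiag : ∀ i, B i i ≠ 0 := by
    have hBdet : B.det ≠ 0 := fun h0 => by simp [h0] at hg
    rw [det_of_isUpperTriangular hB] at hBdet
    exact fun i => Finset.prod_ne_zero_iff.mp hBdet i (Finset.mem_univ i)
  let s : Matrix ι ι ℝ := diagonal fun i => (SignType.sign (B i i) : ℝ)
  have hs : s * s = 1 := by
    rw [diagonal_mul_diagonal, ← diagonal_one]
    congr 1
    funext i
    rcases (hBdiag i).lt_or_gt with h | h <;> simp [h]
  refine ⟨k * s, s * B, ?_, (blockTriangular_diagonal _).mul hB, fun i => ?_, ?_⟩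
  · rw [transpose_mul, diagonal_transpose, Matrix.mul_assoc, ← Matrix.mul_assoc kᵀ, hk,
      Matrix.one_mul, hs]
  · simpa [s, sign_mul_self] using hBdiag i
  · rw [Matrix.mul_assoc, ← Matrix.mul_assoc s, hs, Matrix.one_mul]

lemma existsUnique_orthogonal_mul_isUpperTriangular (g : Matrix ι ι ℝ) (hg : IsUnit g.det) :
    ∃! kB : Matrix ι ι ℝ × Matrix ι ι ℝ,
      kB.1ᵀ * kB.1 = 1 ∧ (kB.2.IsUpperTriangular ∧ ∀ i, 0 < kB.2 i i) ∧ g = kB.1 * kB.2 := by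
  obtain ⟨k, B, hk, hB, hBpos, rfl⟩ := exists_orthogonal_mul_isUpperTriangular_of_diag_pos g hg
  refine ⟨(k, B), ⟨hk, ⟨hB, hBpos⟩, rfl⟩, ?_⟩
  rintro ⟨k', B'⟩ ⟨hk', ⟨hB', hB'pos⟩, h⟩
  obtain ⟨rfl, rfl⟩ := orthogonal_mul_isUpperTriangular_inj hk' hk hB' hB'pos hB hBpos h.symm
  rfl

end Fintype

end Matrix

/-- Iwasawa decomposition of `SL(n,ℝ)`: every `g` with `det g = 1` factors uniquely
as `g = k · a · u` with `k ∈ SO(n)`, `a` diagonal with positive entries and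
determinant `1`, and `u` upper triangular with unit diagonal. -/
theorem iwasawa_decomposition_SL (n : ℕ) (g : Matrix (Fin n) (Fin n) ℝ)
    (hg : g.det = 1) :
    ∃! kau : Matrix (Fin n) (Fin n) ℝ × Matrix (Fin n) (Fin n) ℝ ×
        Matrix (Fin n) (Fin n) ℝ,
      -- `k ∈ SO(n)`
      (kau.1ᵀ * kau.1 = 1 ∧ kau.1.det = 1) ∧
      -- `a` is diagonal with positive diagonal entries and determinant 1
      ((∀ i j, i ≠ j → kau.2.1 i j = 0) ∧ (∀ i, 0 < kau.2.1 i i) ∧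
        kau.2.1.det = 1) ∧
      -- `u` is upper triangular with all diagonal entries equal to 1
      ((∀ i j : Fin n, (j : ℕ) < (i : ℕ) → kau.2.2 i j = 0) ∧
        (∀ i, kau.2.2 i i = 1)) ∧
      g = kau.1 * kau.2.1 * kau.2.2 := by
  obtain ⟨⟨k, B⟩, ⟨hk, ⟨hB, hBpos⟩, rfl⟩, hkB_unique⟩ :=
    existsUnique_orthogonal_mul_isUpperTriangular g (by simp [hg])
  obtain ⟨⟨a, u⟩, ⟨⟨ha, hapos⟩, ⟨hu, hu1⟩, rfl⟩, hau_unique⟩ :=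
    existsUnique_isDiag_mul_unitUpperTriangular hB hBpos
  have hk1 : k.det = 1 := det_eq_one_of_transpose_mul_self hk (hB.det_pos hBpos) hg
  have ha1 : a.det = 1 := by
    have hu_det : u.det = 1 := by
      rw [det_of_isUpperTriangular hu]
      exact Finset.prod_eq_one fun i _ => hu1 i
    simpa [hk1, hu_det] using hg
  refine ⟨(k, a, u), ⟨⟨hk, hk1⟩, ⟨ha, hapos, ha1⟩, ⟨hu, hu1⟩, (Matrix.mul_assoc _ _ _).symm⟩, ?_⟩
  rintro ⟨k', a', u'⟩ ⟨⟨hk', -⟩, ⟨ha', ha'pos, -⟩, ⟨hu', hu'1⟩, hg'⟩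
  have ha'_up : a'.IsUpperTriangular := IsDiag.isUpperTriangular ha'
  have hB'pos : ∀ i, 0 < (a' * u') i i := fun i => by
    rw [ha'_up.mul_apply_self hu', hu'1, mul_one]
    exact ha'pos i
  obtain ⟨hkk', hB'⟩ := Prod.ext_iff.mp <|
    hkB_unique (k', a' * u') ⟨hk', ⟨ha'_up.mul hu', hB'pos⟩, by rw [hg', Matrix.mul_assoc]⟩
  have hau := hau_unique (a', u') ⟨⟨ha', ha'pos⟩, ⟨hu', hu'1⟩, hB'.symm⟩
  exact Prod.ext hkk' hau
end
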